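/- Let P be a symmetric negative definite p×p matrix, Q a symmetric negative definite q×q matrix, N a p×q matrix, and k > 0, λ = k+1. Then the block matrix M = [[(k+1)P, 2kN], [-2Nᵀ, (k+1)Q]] is invertible. -/
import Mathlib

open Matrix

theorem block_matrix_invertible (p q : ℕ)
    (P : Matrix (Fin p) (Fin p) ℝ) (Q : Matrix (Fin q) (Fin q) ℝ)
    (N : Matrix (Fin p) (Fin q) ℝ) (k : ℝ) (hk : 0 < k)
    (hPsymm : P.IsSymm) (hPneg : ∀ x : Fin p → ℝ, x ≠ 0 → x ⬝ᵥ (P *ᵥ x) < 0)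
    (hQsymm : Q.IsSymm) (hQneg : ∀ x : Fin q → ℝ, x ≠ 0 → x ⬝ᵥ (Q *ᵥ x) < 0) :
    IsUnit (Matrix.fromBlocks ((k + 1) • P) ((2 * k) • N) ((-2 : ℝ) • Nᵀ) ((k + 1) • Q)) := by
  rw [← Matrix.mulVec_injective_iff_isUnit]
  suffices key : ∀ v, (Matrix.fromBlocks ((k + 1) • P) ((2 * k) • N) ((-2 : ℝ) • Nᵀ)
      ((k + 1) • Q)) *ᵥ v = 0 → v = 0 by
    intro u w huw
    have := key (u - w) (by rw [Matrix.mulVec_sub, huw, sub_self])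
    exact sub_eq_zero.mp this
  intro v hv
  set x : Fin p → ℝ := v ∘ Sum.inl with hxdef
  set y : Fin q → ℝ := v ∘ Sum.inr with hydef
  rw [Matrix.fromBlocks_mulVec] at hv
  have h1 : ((k + 1) • P) *ᵥ x + ((2 * k) • N) *ᵥ y = 0 := by
    exact funext_iff.mpr (fun i => by simpa using congrFun hv (Sum.inl i))
  have h2 : (((-2 : ℝ)) • Nᵀ) *ᵥ x + ((k + 1) • Q) *ᵥ y = 0 := by
    exact funext_iff.mpr (fun i => by simpa using congrFun hv (Sum.inr i))
  have e1 : (k + 1) * (x ⬝ᵥ (P *ᵥ x)) + (2 * k) * (x ⬝ᵥ (N *ᵥ y)) = 0 := by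
    have := congrArg (fun w => x ⬝ᵥ w) h1
    simpa [Matrix.smul_mulVec, dotProduct_add, dotProduct_smul, smul_eq_mul] using this
  have e2 : (-2 : ℝ) * (y ⬝ᵥ (Nᵀ *ᵥ x)) + (k + 1) * (y ⬝ᵥ (Q *ᵥ y)) = 0 := by
    have := congrArg (fun w => y ⬝ᵥ w) h2
    simpa [Matrix.smul_mulVec, Matrix.neg_mulVec, dotProduct_add, dotProduct_neg,
      dotProduct_smul, smul_eq_mul] using this
  have hsym : y ⬝ᵥ (Nᵀ *ᵥ x) = x ⬝ᵥ (N *ᵥ y) := by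
    rw [Matrix.dotProduct_mulVec, Matrix.vecMul_transpose, dotProduct_comm]
  rw [hsym] at e2
  have comb : x ⬝ᵥ (P *ᵥ x) + k * (y ⬝ᵥ (Q *ᵥ y)) = 0 := by
    have h3 : (k + 1) * (x ⬝ᵥ (P *ᵥ x) + k * (y ⬝ᵥ (Q *ᵥ y))) = 0 := by ring_nf; nlinarith [e1, e2]
    have hk1 : (k + 1) ≠ 0 := by positivity
    exact (mul_eq_zero.mp h3).resolve_left hk1
  have hx : x = 0 := by
    by_contra hx
    have ha := hPneg x hx
    have hkb : k * (y ⬝ᵥ (Q *ᵥ y)) ≤ 0 := by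
      rcases eq_or_ne y 0 with hy | hy
      · simp [hy]
      · exact le_of_lt (mul_neg_of_pos_of_neg hk (hQneg y hy))
    linarith
  have hy : y = 0 := by
    by_contra hy
    have hb := hQneg y hy
    have ha0 : x ⬝ᵥ (P *ᵥ x) = 0 := by simp [hx]
    nlinarith [comb]
  funext i
  cases i with
  | inl i => exact congrFun hx i
  | inr i => exact congrFun hy i
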